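/- Let r, α, β, γ, μ, τ, ω, θ, σ > 0 with ω > τ and γ(μα − β) > 0, let p, q ≥ 0, let z be real with 0 < |z| ≤ 1, and assume r² < [Γ(θk+σ)]^{γα} for every integer k ≥ 1. Then, for ν = 1, the (p,q)-Mathieu-type series with the sequence a_k = [Γ(θk+σ)]^γ satisfies S_{μ,1,τ,ω}^{(α,β)}(r; {[Γ(θk+σ)]^γ}; p,q; z) = (2zτ/ω) Σ_{m=0}^∞ ((μ)_m/m!) (−r²)^m E_{γ((μ+m)α−β), θ, σ+θ; p,q}^{(1, τ+1, ω+1)}(z). -/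

import Mathlib

open Real MeasureTheory Set Filter

/-- Pochhammer symbol `(a)_n = Γ(a+n)/Γ(a)`. -/
noncomputable def poch (a : ℝ) (n : ℕ) : ℝ := Real.Gamma (a + n) / Real.Gamma a

/-- Euler beta function. -/
noncomputable def betaE (x y : ℝ) : ℝ := Real.Gamma x * Real.Gamma y / Real.Gamma (x + y)

/-- Extended beta function `B_{p,q}(x,y)`. -/
noncomputable def betaPQ (p q x y : ℝ) : ℝ :=
  ∫ t in Ioo (0:ℝ) 1, t ^ (x - 1) * (1 - t) ^ (y - 1) * Real.exp (-p / t - q / (1 - t))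

/-- The `(p,q)`-Mittag-Leffler function `E_{δ,θ,σ;p,q}^{(lam,τ,ω)}(z)`. -/
noncomputable def mlPQ (δ θ σ lam τ ω p q z : ℝ) : ℝ :=
  ∑' k : ℕ, poch lam k * betaPQ p q (τ + (k : ℝ)) (ω - τ) * z ^ k /
    (Real.Gamma (θ * (k : ℝ) + σ) ^ δ * betaE τ (ω - τ) * (Nat.factorial k : ℝ))

/-- The `(p,q)`-Mathieu-type power series attached to the sequence `a`. -/
noncomputable def mathieuPQ (μ ν τ ω α β r p q z : ℝ) (a : ℕ → ℝ) : ℝ :=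
  ∑' n : ℕ, 2 * a (n + 1) ^ β * poch ν (n + 1) *
      betaPQ p q (τ + ((n : ℝ) + 1)) (ω - τ) * z ^ (n + 1) /
    ((Nat.factorial (n + 1) : ℝ) * betaE τ (ω - τ) * (a (n + 1) ^ α + r ^ 2) ^ μ)

/-!
Write `a_k^α + r² = a_k^α (1 + r²/a_k^α)` and expand `(1 + r²/a_k^α)^(-μ)` by the binomial
series. The resulting double series converges absolutely: `B_{p,q}(τ+k, ω-τ) ≤ B(1, ω-τ)`
is bounded, and `Γ(θk+σ)^(-ε)` is summable for `ε > 0` because log-convexity of `Γ` gives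
`Γ(x+θ) ≥ (x-1)^θ Γ(x)`, so the ratio test applies. Interchanging the two summations, the inner
sums over `k` are the Mittag-Leffler functions, once `B(τ+1, ω-τ) = (τ/ω) B(τ, ω-τ)` is used.
-/

open Topology

lemma poch_eq_eval_ascPochhammer {a : ℝ} (ha : 0 < a) (n : ℕ) :
    poch a n = (ascPochhammer ℝ n).eval a := by
  induction n with
  | zero => simp [poch, (Real.Gamma_pos_of_pos ha).ne']
  | succ n ih =>
    rw [ascPochhammer_succ_eval, ← ih, poch, poch, Nat.cast_succ, ← add_assoc,
      Real.Gamma_add_one (by positivity), mul_div_assoc, mul_comm]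

lemma poch_one (n : ℕ) : poch 1 n = n.factorial := by
  rw [poch, Real.Gamma_one, add_comm, Real.Gamma_nat_eq_factorial, div_one]

lemma poch_div_factorial_nonneg {a : ℝ} (ha : 0 < a) (n : ℕ) : 0 ≤ poch a n / n.factorial :=
  div_nonneg (div_pos (Real.Gamma_pos_of_pos (by positivity)) (Real.Gamma_pos_of_pos ha)).le
    (Nat.cast_nonneg _)

lemma ring_choose_eq_poch_div_factorial {a : ℝ} (ha : 0 < a) (n : ℕ) :
    Ring.choose (a + n - 1) n = poch a n / n.factorial := by
  rw [Ring.choose_eq_smul, Polynomial.descPochhammer_smeval_eq_ascPochhammer,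
    Polynomial.ascPochhammer_smeval_eq_eval, poch_eq_eval_ascPochhammer ha, smul_eq_mul,
    inv_mul_eq_div]
  ring_nf

lemma hasSum_poch_div_factorial_mul_pow {μ x : ℝ} (hμ : 0 < μ) (hx : |x| < 1) :
    HasSum (fun m : ℕ => poch μ m / m.factorial * x ^ m) ((1 - x) ^ (-μ)) := by
  have h := (Real.one_div_one_sub_rpow_hasFPowerSeriesOnBall_zero μ).hasSum
    (y := x) (by simpa [enorm_eq_nnnorm, ← NNReal.coe_lt_coe] using hx)
  simp only [FormalMultilinearSeries.ofScalars_apply_eq, smul_eq_mul, zero_add,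
    ring_choose_eq_poch_div_factorial hμ, one_div] at h
  rwa [Real.rpow_neg (by linarith [(abs_lt.mp hx).2])]

lemma Summable.mul_of_tendsto {f g : ℕ → ℝ} {c : ℝ} (hf : Summable f)
    (hg : Tendsto g atTop (𝓝 c)) : Summable fun n => f n * g n :=
  summable_of_isBigO_nat hf (by simpa using (Asymptotics.isBigO_refl f atTop).mul (hg.isBigO_one ℝ))

theorem tsum_mul_one_sub_rpow_neg_eq_tsum_poch {μ : ℝ} (hμ : 0 < μ) {w x : ℕ → ℝ}
    (hw : Summable w) (hx : ∀ n, |x n| < 1) (hx0 : Tendsto x atTop (𝓝 0)) :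
    ∑' n, w n * (1 - x n) ^ (-μ) =
      ∑' m : ℕ, poch μ m / m.factorial * ∑' n, w n * x n ^ m := by
  set f : ℕ → ℕ → ℝ := fun n m => w n * (poch μ m / m.factorial * x n ^ m)
  have hrow (n : ℕ) : HasSum (f n) (w n * (1 - x n) ^ (-μ)) :=
    (hasSum_poch_div_factorial_mul_pow hμ (hx n)).mul_left (w n)
  have habsrow (n : ℕ) : HasSum (fun m => |f n m|) (|w n| * (1 - |x n|) ^ (-μ)) := by
    have habs : (fun m => |f n m|) = fun m => |w n| * (poch μ m / m.factorial * |x n| ^ m) :=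
      funext fun m => by
        rw [abs_mul, abs_mul, abs_pow, abs_of_nonneg (poch_div_factorial_nonneg hμ m)]
    rw [habs]
    exact (hasSum_poch_div_factorial_mul_pow hμ ((abs_abs (x n)).symm ▸ hx n)).mul_left |w n|
  have hmajorant : Summable fun n => |w n| * (1 - |x n|) ^ (-μ) :=
    hw.abs.mul_of_tendsto ((tendsto_const_nhds.sub hx0.abs).rpow_const (Or.inl (by norm_num)))
  have hf : Summable (Function.uncurry f) :=
    Summable.of_abs <| (summable_prod_of_nonneg fun _ => abs_nonneg _).mpr
      ⟨fun n => (habsrow n).summable, hmajorant.congr fun n => (habsrow n).tsum_eq.symm⟩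
  rw [tsum_congr fun n => (hrow n).tsum_eq.symm,
    ← hf.tsum_comm' (fun n => (hrow n).summable) fun m => hf.prod_symm.prod_factor m]
  refine tsum_congr fun m => ?_
  rw [← tsum_mul_left]
  exact tsum_congr fun n => by ring

lemma Gamma_mul_rpow_le_Gamma_add {x θ : ℝ} (hx : 1 < x) (hθ : 0 < θ) :
    Real.Gamma x * (x - 1) ^ θ ≤ Real.Gamma (x + θ) := by
  have hx1 : 0 < x - 1 := by linarith
  have hslope := Real.convexOn_log_Gamma.slope_mono_adjacent (x := x - 1) (y := x) (z := x + θ)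
    hx1 (by simp only [mem_Ioi]; linarith) (by linarith) (by linarith)
  have hlog : Real.log (Real.Gamma x) - Real.log (Real.Gamma (x - 1)) = Real.log (x - 1) := by
    rw [← sub_add_cancel x 1, Real.Gamma_add_one hx1.ne', add_sub_cancel_right,
      Real.log_mul hx1.ne' (Real.Gamma_pos_of_pos hx1).ne']
    ring
  simp only [Function.comp, sub_sub_cancel, add_sub_cancel_left, div_one, hlog,
    le_div_iff₀ hθ] at hslope
  rw [← Real.exp_log (Real.Gamma_pos_of_pos (by linarith : 0 < x + θ)),
    ← Real.exp_log (Real.Gamma_pos_of_pos (by linarith : 0 < x)), Real.rpow_def_of_pos hx1,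
    ← Real.exp_add]
  exact Real.exp_le_exp.mpr (by linarith)

lemma tendsto_Gamma_atTop : Tendsto Real.Gamma atTop atTop := by
  refine tendsto_atTop_mono' atTop ?_ (tendsto_atTop_add_const_right atTop (-1) tendsto_id)
  filter_upwards [eventually_ge_atTop 3] with x hx
  have hGamma : 1 ≤ Real.Gamma (x - 1) := by
    simpa [Real.Gamma_two] using Real.Gamma_strictMonoOn_Ici.monotoneOn
      (by norm_num : (2:ℝ) ∈ Ici 2) (by simp only [mem_Ici]; linarith) (by linarith)
  rw [← sub_add_cancel x 1, Real.Gamma_add_one (by linarith)]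
  simp only [id, sub_add_cancel]
  nlinarith

lemma summable_Gamma_mul_add_rpow_neg {θ σ ε : ℝ} (hθ : 0 < θ) (hε : 0 < ε) :
    Summable fun n : ℕ => Real.Gamma (θ * n + σ) ^ (-ε) := by
  have hlin : Tendsto (fun n : ℕ => θ * n + σ) atTop atTop :=
    tendsto_atTop_add_const_right _ _
      ((tendsto_natCast_atTop_atTop).const_mul_atTop hθ)
  have hratio : Tendsto (fun n : ℕ => (θ * n + σ - 1) ^ (-(θ * ε))) atTop (𝓝 0) :=
    (tendsto_rpow_neg_atTop (by positivity)).comp (tendsto_atTop_add_const_right _ _ hlin)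
  refine summable_of_ratio_norm_eventually_le (r := 1 / 2) (by norm_num) ?_
  filter_upwards [hlin.eventually_gt_atTop 1, hratio.eventually (ge_mem_nhds (by norm_num :
    (0:ℝ) < 1 / 2))] with n hn hsmall
  have hG := Real.Gamma_pos_of_pos (by linarith : 0 < θ * n + σ)
  have hG' := Real.Gamma_pos_of_pos (by linarith : 0 < θ * n + σ + θ)
  have hstep : θ * ((n + 1 : ℕ) : ℝ) + σ = (θ * n + σ) + θ := by push_cast; ring
  rw [hstep, Real.norm_of_nonneg (Real.rpow_nonneg hG'.le _),
    Real.norm_of_nonneg (Real.rpow_nonneg hG.le _)]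
  calc Real.Gamma (θ * n + σ + θ) ^ (-ε)
      ≤ (Real.Gamma (θ * n + σ) * (θ * n + σ - 1) ^ θ) ^ (-ε) :=
        Real.rpow_le_rpow_of_nonpos (by positivity) (Gamma_mul_rpow_le_Gamma_add hn hθ)
          (by linarith)
    _ = (θ * n + σ - 1) ^ (-(θ * ε)) * Real.Gamma (θ * n + σ) ^ (-ε) := by
        rw [Real.mul_rpow hG.le (by positivity), ← Real.rpow_mul (by linarith)]
        ring_nf
    _ ≤ 1 / 2 * Real.Gamma (θ * n + σ) ^ (-ε) := by gcongr

lemma betaPQ_integrand_nonneg {t : ℝ} (ht : t ∈ Ioo (0 : ℝ) 1) (p q x y : ℝ) :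
    0 ≤ t ^ (x - 1) * (1 - t) ^ (y - 1) * Real.exp (-p / t - q / (1 - t)) := by
  have := sub_pos.2 ht.2
  have := ht.1
  positivity

lemma betaPQ_nonneg (p q x y : ℝ) : 0 ≤ betaPQ p q x y :=
  setIntegral_nonneg measurableSet_Ioo fun _ ht => betaPQ_integrand_nonneg ht p q x y

lemma betaPQ_le_betaPQ_zero_zero_one {p q x y : ℝ} (hp : 0 ≤ p) (hq : 0 ≤ q) (hx : 1 ≤ x)
    (hy : 0 < y) : betaPQ p q x y ≤ betaPQ 0 0 1 y := by
  have hdom : betaPQ 0 0 1 y = ∫ t in Ioo (0:ℝ) 1, (1 - t) ^ (y - 1) := by simp [betaPQ]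
  rw [hdom, betaPQ]
  refine integral_mono_of_nonneg
    (ae_restrict_of_forall_mem measurableSet_Ioo fun _ ht => betaPQ_integrand_nonneg ht p q x y)
    ?_ (ae_restrict_of_forall_mem measurableSet_Ioo fun t ht => ?_)
  · have h := (intervalIntegral.intervalIntegrable_rpow' (a := 0) (b := 1) (r := y - 1)
      (by linarith)).comp_sub_left 1
    rw [sub_zero, sub_self] at h
    exact (intervalIntegrable_iff_integrableOn_Ioo_of_le zero_le_one).mp h.symm
  · have h1 : 0 < 1 - t := sub_pos.2 ht.2
    have hpow : t ^ (x - 1) ≤ 1 := Real.rpow_le_one ht.1.le ht.2.le (by linarith)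
    have hexp : Real.exp (-p / t - q / (1 - t)) ≤ 1 := by
      rw [Real.exp_le_one_iff, neg_div]
      have := div_nonneg hp ht.1.le
      have := div_nonneg hq h1.le
      linarith
    calc t ^ (x - 1) * (1 - t) ^ (y - 1) * Real.exp (-p / t - q / (1 - t))
        ≤ 1 * (1 - t) ^ (y - 1) * 1 := by gcongr
      _ = (1 - t) ^ (y - 1) := by ring

lemma summable_betaPQ_mul_pow_mul {p q τ y z : ℝ} {u : ℕ → ℝ} (hp : 0 ≤ p) (hq : 0 ≤ q)
    (hτ : 0 ≤ τ) (hy : 0 < y) (hz : |z| ≤ 1) (hu : Summable u) :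
    Summable fun n : ℕ => betaPQ p q (τ + ((n : ℝ) + 1)) y * z ^ (n + 1) * u n := by
  refine Summable.of_norm_bounded (hu.abs.mul_left (betaPQ 0 0 1 y)) fun n => ?_
  rw [norm_mul, norm_mul, Real.norm_of_nonneg (betaPQ_nonneg _ _ _ _), norm_pow,
    Real.norm_eq_abs, Real.norm_eq_abs]
  have hbeta := betaPQ_le_betaPQ_zero_zero_one hp hq (x := τ + ((n : ℝ) + 1))
    (by linarith [(n.cast_nonneg : (0:ℝ) ≤ n)]) hy
  have hdom := betaPQ_nonneg 0 0 1 y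
  have hzpow : |z| ^ (n + 1) ≤ 1 := pow_le_one₀ (abs_nonneg z) hz
  calc betaPQ p q (τ + ((n : ℝ) + 1)) y * |z| ^ (n + 1) * |u n|
      ≤ betaPQ 0 0 1 y * 1 * |u n| := by gcongr
    _ = betaPQ 0 0 1 y * |u n| := by ring

lemma betaE_add_one_left {x y : ℝ} (hx : x ≠ 0) (hxy : x + y ≠ 0) :
    betaE (x + 1) y = x / (x + y) * betaE x y := by
  rw [betaE, betaE, add_right_comm, Real.Gamma_add_one hx, Real.Gamma_add_one hxy, mul_assoc x,
    mul_div_mul_comm]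

lemma mathieu_summand_eq {G : ℝ} (hG : 0 < G) (k : ℕ) (b B z r α β γ μ : ℝ) :
    2 * (G ^ γ) ^ β * poch 1 k * b * z ^ k / (k.factorial * B * ((G ^ γ) ^ α + r ^ 2) ^ μ) =
      2 / B * (b * z ^ k * G ^ (-(γ * (μ * α - β)))) * (1 - -(r ^ 2 / G ^ (γ * α))) ^ (-μ) := by
  have hA : 0 < G ^ (γ * α) := Real.rpow_pos_of_pos hG _
  have h1 : 0 < 1 - -(r ^ 2 / G ^ (γ * α)) := by
    rw [sub_neg_eq_add]
    positivity
  have hsplit : G ^ (γ * α) + r ^ 2 = G ^ (γ * α) * (1 - -(r ^ 2 / G ^ (γ * α))) := by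
    field_simp
    ring
  rw [poch_one, ← Real.rpow_mul hG.le, ← Real.rpow_mul hG.le, hsplit, Real.mul_rpow hA.le h1.le,
    ← Real.rpow_mul hG.le, Real.rpow_neg h1.le, Real.rpow_neg hG.le,
    show γ * (μ * α - β) = γ * α * μ - γ * β by ring, Real.rpow_sub hG]
  have := (Nat.factorial_pos k).ne'
  field_simp

lemma weight_mul_pow_eq_mittagLeffler_summand {G : ℝ} (hG : 0 < G) (n m : ℕ)
    (b B z r α β γ μ τ ω : ℝ)
    (hτ : τ ≠ 0) (hω : ω ≠ 0) :
    2 / B * (b * z ^ (n + 1) * G ^ (-(γ * (μ * α - β)))) * (-(r ^ 2 / G ^ (γ * α))) ^ m =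
      (-r ^ 2) ^ m * (2 * z * τ / ω *
        (poch 1 n * b * z ^ n / (G ^ (γ * ((μ + m) * α - β)) * (τ / ω * B) * n.factorial))) := by
  rw [poch_one, ← neg_div, div_pow, ← Real.rpow_natCast (G ^ (γ * α)) m, ← Real.rpow_mul hG.le,
    show γ * ((μ + m) * α - β) = γ * (μ * α - β) + γ * α * m by ring, Real.rpow_add hG,
    Real.rpow_neg hG.le]
  have := (Nat.factorial_pos n).ne'
  field_simp
  ring

lemma tsum_weight_mul_pow_eq_mlPQ {r α β γ μ τ ω θ σ p q z : ℝ} (hτ : 0 < τ) (hω : 0 < ω)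
    (hθ : 0 < θ) (hσ : 0 < σ) (m : ℕ) :
    ∑' n : ℕ, 2 / betaE τ (ω - τ) * (betaPQ p q (τ + ((n : ℝ) + 1)) (ω - τ) * z ^ (n + 1) *
        Real.Gamma (θ * ((n : ℝ) + 1) + σ) ^ (-(γ * (μ * α - β)))) *
        (-(r ^ 2 / Real.Gamma (θ * ((n : ℝ) + 1) + σ) ^ (γ * α))) ^ m =
      (-r ^ 2) ^ m * (2 * z * τ / ω *
        mlPQ (γ * ((μ + (m : ℝ)) * α - β)) θ (σ + θ) 1 (τ + 1) (ω + 1) p q z) := by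
  rw [mlPQ, ← tsum_mul_left, ← tsum_mul_left]
  refine tsum_congr fun n => ?_
  rw [show ω + 1 - (τ + 1) = ω - τ by ring, show τ + 1 + (n : ℝ) = τ + ((n : ℝ) + 1) by ring,
    show θ * (n : ℝ) + (σ + θ) = θ * ((n : ℝ) + 1) + σ by ring,
    betaE_add_one_left hτ.ne' (by linarith), add_sub_cancel]
  exact weight_mul_pow_eq_mittagLeffler_summand (Real.Gamma_pos_of_pos (by positivity)) n m _ _
    z r α β γ μ τ ω hτ.ne' hω.ne'

theorem statement13_general (r α β γ μ τ ω θ σ p q z : ℝ)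
    (hα : 0 < α) (hγ : 0 < γ) (hμ : 0 < μ)
    (hτ : 0 < τ) (hω : 0 < ω) (hθ : 0 < θ) (hσ : 0 < σ) (hτω : τ < ω)
    (hexp : 0 < γ * (μ * α - β)) (hp : 0 ≤ p) (hq : 0 ≤ q)
    (hz : |z| ≤ 1)
    (hra : ∀ k : ℕ, 1 ≤ k → r ^ 2 < Real.Gamma (θ * (k : ℝ) + σ) ^ (γ * α)) :
    mathieuPQ μ 1 τ ω α β r p q z (fun k => Real.Gamma (θ * (k : ℝ) + σ) ^ γ) =
      2 * z * τ / ω *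
        ∑' m : ℕ, poch μ m / (Nat.factorial m : ℝ) * (-r ^ 2) ^ m *
          mlPQ (γ * ((μ + (m : ℝ)) * α - β)) θ (σ + θ) 1 (τ + 1) (ω + 1) p q z := by
  set G : ℕ → ℝ := fun n => Real.Gamma (θ * ((n : ℝ) + 1) + σ)
  have hG (n : ℕ) : 0 < G n := Real.Gamma_pos_of_pos (by positivity)
  set w : ℕ → ℝ := fun n => 2 / betaE τ (ω - τ) *
    (betaPQ p q (τ + ((n : ℝ) + 1)) (ω - τ) * z ^ (n + 1) * G n ^ (-(γ * (μ * α - β))))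
  set x : ℕ → ℝ := fun n => -(r ^ 2 / G n ^ (γ * α))
  have hw : Summable w := by
    refine (summable_betaPQ_mul_pow_mul hp hq hτ.le (sub_pos.2 hτω) hz ?_).mul_left _
    simpa only [Nat.cast_succ] using
      (summable_nat_add_iff 1).2 (summable_Gamma_mul_add_rpow_neg (σ := σ) hθ hexp)
  have hx (n : ℕ) : |x n| < 1 := by
    have := hra (n + 1) n.succ_pos
    rw [abs_neg, abs_of_nonneg (by positivity), div_lt_one (by positivity)]
    simpa using this
  have hx0 : Tendsto x atTop (𝓝 0) := by
    have hGtop : Tendsto G atTop atTop := tendsto_Gamma_atTop.comp <|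
      tendsto_atTop_add_const_right _ _ <| (tendsto_atTop_add_const_right _ _
        tendsto_natCast_atTop_atTop).const_mul_atTop hθ
    simpa using (tendsto_const_nhds.div_atTop
      ((tendsto_rpow_atTop (by positivity)).comp hGtop)).neg
  calc mathieuPQ μ 1 τ ω α β r p q z (fun k => Real.Gamma (θ * (k : ℝ) + σ) ^ γ)
      = ∑' n, w n * (1 - x n) ^ (-μ) := tsum_congr fun n => by
        simpa only [Nat.cast_succ] using mathieu_summand_eq (hG n) (n + 1) _ _ z r α β γ μ
    _ = ∑' m : ℕ, poch μ m / m.factorial * ∑' n, w n * x n ^ m :=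
        tsum_mul_one_sub_rpow_neg_eq_tsum_poch hμ hw hx hx0
    _ = _ := by
        rw [← tsum_mul_left]
        exact tsum_congr fun m => by rw [tsum_weight_mul_pow_eq_mlPQ hτ hω hθ hσ m]; ring

theorem statement13 (r α β γ μ τ ω θ σ p q z : ℝ)
    (hr : 0 < r) (hα : 0 < α) (hβ : 0 < β) (hγ : 0 < γ) (hμ : 0 < μ)
    (hτ : 0 < τ) (hω : 0 < ω) (hθ : 0 < θ) (hσ : 0 < σ) (hτω : τ < ω)
    (hexp : 0 < γ * (μ * α - β)) (hp : 0 ≤ p) (hq : 0 ≤ q)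
    (hz0 : 0 < |z|) (hz : |z| ≤ 1)
    (hra : ∀ k : ℕ, 1 ≤ k → r ^ 2 < Real.Gamma (θ * (k : ℝ) + σ) ^ (γ * α)) :
    mathieuPQ μ 1 τ ω α β r p q z (fun k => Real.Gamma (θ * (k : ℝ) + σ) ^ γ) =
      2 * z * τ / ω *
        ∑' m : ℕ, poch μ m / (Nat.factorial m : ℝ) * (-r ^ 2) ^ m *
          mlPQ (γ * ((μ + (m : ℝ)) * α - β)) θ (σ + θ) 1 (τ + 1) (ω + 1) p q z :=
  statement13_general r α β γ μ τ ω θ σ p q z hα hγ hμ hτ hω hθ hσ hτω hexp hp hq hz hra
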